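/- Let m ∈ ℕ, n = 2m+1, and let s : Fin n → ℝ be injective. Define the median med(s) as the (m+1)-th smallest value of s, i.e., med(s) = (s ∘ σ) m for any permutation σ of Fin n such that s ∘ σ is monotone. Let k ∈ Fin n be the node attaining the median, i.e., s k = med(s), and let s̃ : Fin n → ℝ satisfy s̃ j = s j for every j ≠ k and s̃ k ≠ s k. Then med(s̃) ≠ med(s). -/

import Mathlib

/-!
The argument works for every order statistic, not only the median. If `s ∘ σ` is monotone and
`M = s (σ i)`, then at least `i + 1` values of `s` are `≤ M` and at least `n - i` are `≥ M`.
Suppose `s̃` had the same `i`-th order statistic `M = s k`. If `s̃ k < M`, then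
`{j | M ≤ s̃ j}` has at least `n - i` elements, avoids `k`, and by injectivity lies in
`{j | M < s j}`, which has at most `n - (i + 1)` elements. The case `s̃ k > M` is the order dual.
-/

open Finset

section OrderStatistic

variable {α : Type*} {n : ℕ}

lemma le_card_filter_le_of_monotone_comp [Preorder α] [DecidableLE α] {f : Fin n → α}
    {σ : Equiv.Perm (Fin n)} (hσ : Monotone (f ∘ σ)) (i : Fin n) :
    (i : ℕ) + 1 ≤ #{j | f j ≤ f (σ i)} := by
  calc (i : ℕ) + 1 = #((Iic i).map σ.toEmbedding) := by simp
    _ ≤ #{j | f j ≤ f (σ i)} := card_le_card <| by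
      intro j hj
      obtain ⟨a, ha, rfl⟩ := mem_map.mp hj
      simpa using hσ (mem_Iic.mp ha)

lemma le_card_filter_ge_of_monotone_comp [Preorder α] [DecidableLE α] {f : Fin n → α}
    {σ : Equiv.Perm (Fin n)} (hσ : Monotone (f ∘ σ)) (i : Fin n) :
    n - i ≤ #{j | f (σ i) ≤ f j} := by
  calc n - i = #((Ici i).map σ.toEmbedding) := by simp
    _ ≤ #{j | f (σ i) ≤ f j} := card_le_card <| by
      intro j hj
      obtain ⟨a, ha, rfl⟩ := mem_map.mp hj
      simpa using hσ (mem_Ici.mp ha)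

lemma card_filter_gt_le_of_monotone_comp [LinearOrder α] {f : Fin n → α}
    {σ : Equiv.Perm (Fin n)} (hσ : Monotone (f ∘ σ)) (i : Fin n) :
    #{j | f (σ i) < f j} ≤ n - (i + 1) := by
  have hsplit := card_filter_add_card_filter_not (s := univ) (fun j => f j ≤ f (σ i))
  simp only [not_le, card_univ, Fintype.card_fin] at hsplit
  have := le_card_filter_le_of_monotone_comp hσ i
  omega

lemma card_filter_lt_le_of_monotone_comp [LinearOrder α] {f : Fin n → α}
    {σ : Equiv.Perm (Fin n)} (hσ : Monotone (f ∘ σ)) (i : Fin n) :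
    #{j | f j < f (σ i)} ≤ i := by
  have hsplit := card_filter_add_card_filter_not (s := univ) (fun j => f (σ i) ≤ f j)
  simp only [not_le, card_univ, Fintype.card_fin] at hsplit
  have := le_card_filter_ge_of_monotone_comp hσ i
  omega

lemma filter_le_subset_filter_lt_of_update [LinearOrder α] {f g : Fin n → α}
    (hf : Function.Injective f) {k : Fin n} (hfg : ∀ j, j ≠ k → g j = f j) (hgk : g k < f k) :
    ({j | f k ≤ g j} : Finset (Fin n)) ⊆ ({j | f k < f j} : Finset (Fin n)) := by
  intro j hj
  simp only [mem_filter, mem_univ, true_and] at hj ⊢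
  have hjk : j ≠ k := by rintro rfl; exact hj.not_gt hgk
  rw [hfg j hjk] at hj
  exact hj.lt_of_ne fun h => hjk (hf h.symm)

theorem apply_orderStatistic_ne_of_update [LinearOrder α] {f g : Fin n → α}
    (hf : Function.Injective f) {k : Fin n} (hfg : ∀ j, j ≠ k → g j = f j)
    {σ τ : Equiv.Perm (Fin n)} (hσ : Monotone (f ∘ σ)) (hτ : Monotone (g ∘ τ)) {i : Fin n}
    (hk : f k = f (σ i)) (hgk : g k ≠ f k) : g (τ i) ≠ f (σ i) := by
  intro h
  rw [← hk] at h
  rcases hgk.lt_or_gt with hlt | hgt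
  · have hsub := card_le_card (filter_le_subset_filter_lt_of_update hf hfg hlt)
    have hmany := le_card_filter_ge_of_monotone_comp hτ i
    have hfew := card_filter_gt_le_of_monotone_comp hσ i
    rw [h] at hmany
    rw [← hk] at hfew
    omega
  · have hsub : #{j | g j ≤ f k} ≤ #{j | f j < f k} :=
      card_le_card <| filter_le_subset_filter_lt_of_update (α := αᵒᵈ)
        (f := OrderDual.toDual ∘ f) (g := OrderDual.toDual ∘ g) hf
        (fun j hj => congrArg _ (hfg j hj)) hgt
    have hmany := le_card_filter_le_of_monotone_comp hτ i
    have hfew := card_filter_lt_le_of_monotone_comp hσ i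
    rw [h] at hmany
    rw [← hk] at hfew
    omega

end OrderStatistic

/-- The median holder's value is pinned down: for distinct values, if node `k` attains
the median and `s̃` agrees with `s` except at `k` with `s̃ k ≠ s k`, then the median
changes. Here the median of a `(2m+1)`-tuple is its `(m+1)`-th smallest value,
obtained via any sorting permutation. -/
theorem stmt_17 (m : ℕ) (s : Fin (2 * m + 1) → ℝ) (hs : Function.Injective s)
    (st : Fin (2 * m + 1) → ℝ) (k : Fin (2 * m + 1))
    (hst : ∀ j, j ≠ k → st j = s j)
    (σ σ' : Equiv.Perm (Fin (2 * m + 1)))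
    (hσ : Monotone (s ∘ σ)) (hσ' : Monotone (st ∘ σ'))
    (hk : s k = s (σ ⟨m, by omega⟩)) (hstk : st k ≠ s k) :
    st (σ' ⟨m, by omega⟩) ≠ s (σ ⟨m, by omega⟩) :=
  apply_orderStatistic_ne_of_update hs hst hσ hσ' hk hstk
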